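/- arXiv:1111.0287 — 4 statements merged into one kernel-verified Lean document; each statement's English description precedes it below -/
import Mathlib

section
/- Let G be a group, f : G → ℝ subadditive, and μ its homogenization. Let T ⊆ G be a subset closed under conjugation (ψτψ^{−1} ∈ T for all τ ∈ T, ψ ∈ G), and let e₀ ≥ 0 be such that |f(τ)| ≤ e₀ and |f(τ^{−1})| ≤ e₀ for every τ ∈ T. If φ ∈ G can be written as a product φ = τ₁τ₂⋯τ_m of m elements of T, then |μ(φψ) − μ(ψ)| ≤ m·e₀ for every ψ ∈ G; in particular |μ(φ)| ≤ m·e₀. -/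
/-!
Since `(φψ)^k = (φ)(ψφψ⁻¹)⋯(ψ^{k-1}φψ^{1-k}) ψ^k`, so subadditivity gives
`f((φψ)^k) ≤ k C + f(ψ^k)` whenever every conjugate of `φ` has `f`-value at most `C`;
dividing by `k` yields `μ(φψ) ≤ C + μ(ψ)`. For `τ ∈ T` all conjugates of `τ` and of `τ⁻¹`
lie in `T` resp. `T⁻¹`, so applying this to `τχ` and to `χ = τ⁻¹(τχ)` gives
`|μ(τχ) - μ(χ)| ≤ e₀`; the estimate for a product of `m` elements of `T` follows by
telescoping, and `μ(1) = 0` gives the bound on `|μ φ|`.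
-/

open Filter Topology

section Homogenization

variable {G : Type*} [Group G] {f μ : G → ℝ}

def IsHomogenization (f μ : G → ℝ) : Prop :=
  ∀ φ : G, Tendsto (fun k : ℕ => f (φ ^ k) / k) atTop (𝓝 (μ φ))

theorem IsHomogenization.map_one (hμ : IsHomogenization f μ) : μ 1 = 0 :=
  tendsto_nhds_unique (hμ 1) <| by
    simpa only [one_pow] using tendsto_const_div_atTop_nhds_zero_nat (f 1)

theorem subadditive_mul_pow_mul_inv_pow_mul_le (hf : ∀ φ ψ : G, f (φ * ψ) ≤ f φ + f ψ)
    {φ ψ : G} {C : ℝ} (hC : ∀ j : ℕ, f (ψ ^ j * φ * (ψ ^ j)⁻¹) ≤ C) (k : ℕ) (x : G) :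
    f ((φ * ψ) ^ k * (ψ ^ k)⁻¹ * x) ≤ k * C + f x := by
  induction k generalizing x with
  | zero => simp
  | succ k ih =>
    have hsplit : (φ * ψ) ^ (k + 1) * (ψ ^ (k + 1))⁻¹ * x
        = (φ * ψ) ^ k * (ψ ^ k)⁻¹ * (ψ ^ k * φ * (ψ ^ k)⁻¹ * x) := by
      rw [pow_succ, pow_succ]
      group
    rw [hsplit]
    push_cast
    linarith [ih (ψ ^ k * φ * (ψ ^ k)⁻¹ * x), hf (ψ ^ k * φ * (ψ ^ k)⁻¹) x, hC k]

theorem le_add_of_tendsto_div_of_le {u v : ℕ → ℝ} {a b C : ℝ}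
    (hu : Tendsto (fun k : ℕ => u k / k) atTop (𝓝 a))
    (hv : Tendsto (fun k : ℕ => v k / k) atTop (𝓝 b)) (huv : ∀ k : ℕ, u k ≤ k * C + v k) :
    a ≤ C + b := by
  refine le_of_tendsto_of_tendsto hu (tendsto_const_nhds.add hv) ?_
  filter_upwards [eventually_gt_atTop 0] with k hk
  have hk : (0 : ℝ) < k := by exact_mod_cast hk
  rw [div_le_iff₀ hk, add_mul, div_mul_cancel₀ _ hk.ne']
  linarith [huv k]

theorem IsHomogenization.mul_le (hf : ∀ φ ψ : G, f (φ * ψ) ≤ f φ + f ψ)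
    (hμ : IsHomogenization f μ) {φ ψ : G} {C : ℝ}
    (hC : ∀ j : ℕ, f (ψ ^ j * φ * (ψ ^ j)⁻¹) ≤ C) : μ (φ * ψ) ≤ C + μ ψ :=
  le_add_of_tendsto_div_of_le (hμ (φ * ψ)) (hμ ψ) fun k => by
    simpa using subadditive_mul_pow_mul_inv_pow_mul_le hf hC k (ψ ^ k)

theorem IsHomogenization.abs_mul_sub_le_of_mem (hf : ∀ φ ψ : G, f (φ * ψ) ≤ f φ + f ψ)
    (hμ : IsHomogenization f μ) {T : Set G} (hT : ∀ τ ∈ T, ∀ ψ : G, ψ * τ * ψ⁻¹ ∈ T)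
    {e₀ : ℝ} (hTf : ∀ τ ∈ T, |f τ| ≤ e₀ ∧ |f τ⁻¹| ≤ e₀) {τ : G} (hτ : τ ∈ T) (χ : G) :
    |μ (τ * χ) - μ χ| ≤ e₀ := by
  have hle : μ (τ * χ) ≤ e₀ + μ χ :=
    hμ.mul_le hf fun j => (le_abs_self _).trans (hTf _ (hT τ hτ (χ ^ j))).1
  have hge : μ χ ≤ e₀ + μ (τ * χ) := by
    have hconj : ∀ g : G, g * τ⁻¹ * g⁻¹ = (g * τ * g⁻¹)⁻¹ := fun g => by group
    simpa using hμ.mul_le hf (φ := τ⁻¹) (ψ := τ * χ) fun j => by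
      rw [hconj]
      exact (le_abs_self _).trans (hTf _ (hT τ hτ _)).2
  rw [abs_sub_le_iff]
  constructor <;> linarith

theorem IsHomogenization.abs_list_prod_mul_sub_le (hf : ∀ φ ψ : G, f (φ * ψ) ≤ f φ + f ψ)
    (hμ : IsHomogenization f μ) {T : Set G} (hT : ∀ τ ∈ T, ∀ ψ : G, ψ * τ * ψ⁻¹ ∈ T)
    {e₀ : ℝ} (hTf : ∀ τ ∈ T, |f τ| ≤ e₀ ∧ |f τ⁻¹| ≤ e₀) {L : List G} (hLT : ∀ τ ∈ L, τ ∈ T)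
    (ψ : G) : |μ (L.prod * ψ) - μ ψ| ≤ L.length * e₀ := by
  induction L with
  | nil => simp
  | cons τ L ih =>
    have hτ := hμ.abs_mul_sub_le_of_mem hf hT hTf (hLT τ List.mem_cons_self) (L.prod * ψ)
    have hL := ih fun σ hσ => hLT σ (List.mem_cons_of_mem τ hσ)
    rw [List.prod_cons, mul_assoc, List.length_cons, Nat.cast_succ]
    calc |μ (τ * (L.prod * ψ)) - μ ψ|
        ≤ |μ (τ * (L.prod * ψ)) - μ (L.prod * ψ)| + |μ (L.prod * ψ) - μ ψ| :=
          abs_sub_le _ _ _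
      _ ≤ (L.length + 1) * e₀ := by linarith

end Homogenization

theorem homogenization_fragmentation_estimate_general {G : Type*} [Group G] (f : G → ℝ)
    (hf : ∀ φ ψ : G, f (φ * ψ) ≤ f φ + f ψ)
    (μ : G → ℝ)
    (hμ : ∀ φ : G,
      Filter.Tendsto (fun k : ℕ => f (φ ^ k) / (k : ℝ)) Filter.atTop (nhds (μ φ)))
    (T : Set G) (hT : ∀ τ ∈ T, ∀ ψ : G, ψ * τ * ψ⁻¹ ∈ T)
    (e₀ : ℝ)
    (hTf : ∀ τ ∈ T, |f τ| ≤ e₀ ∧ |f τ⁻¹| ≤ e₀)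
    (φ : G) (m : ℕ) (L : List G) (hLm : L.length = m) (hLT : ∀ τ ∈ L, τ ∈ T)
    (hφ : φ = L.prod) :
    (∀ ψ : G, |μ (φ * ψ) - μ ψ| ≤ (m : ℝ) * e₀) ∧ |μ φ| ≤ (m : ℝ) * e₀ := by
  have hμ : IsHomogenization f μ := hμ
  have hestimate (ψ : G) : |μ (φ * ψ) - μ ψ| ≤ m * e₀ := by
    subst hφ hLm
    exact hμ.abs_list_prod_mul_sub_le hf hT hTf hLT ψ
  refine ⟨hestimate, ?_⟩
  simpa [hμ.map_one] using hestimate 1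

/-- Let `G` be a group, `f : G → ℝ` subadditive, and `μ` its
homogenization. Let `T ⊆ G` be a subset closed under conjugation and `e₀ ≥ 0` be such
that `|f τ| ≤ e₀` and `|f τ⁻¹| ≤ e₀` for every `τ ∈ T`. If `φ` can be written as a
product of `m` elements of `T`, then `|μ (φ * ψ) - μ ψ| ≤ m * e₀` for every `ψ : G`;
in particular `|μ φ| ≤ m * e₀`. -/
theorem homogenization_fragmentation_estimate {G : Type*} [Group G] (f : G → ℝ)
    (hf : ∀ φ ψ : G, f (φ * ψ) ≤ f φ + f ψ)
    (μ : G → ℝ)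
    (hμ : ∀ φ : G,
      Filter.Tendsto (fun k : ℕ => f (φ ^ k) / (k : ℝ)) Filter.atTop (nhds (μ φ)))
    (T : Set G) (hT : ∀ τ ∈ T, ∀ ψ : G, ψ * τ * ψ⁻¹ ∈ T)
    (e₀ : ℝ) (he₀ : 0 ≤ e₀)
    (hTf : ∀ τ ∈ T, |f τ| ≤ e₀ ∧ |f τ⁻¹| ≤ e₀)
    (φ : G) (m : ℕ) (L : List G) (hLm : L.length = m) (hLT : ∀ τ ∈ L, τ ∈ T)
    (hφ : φ = L.prod) :
    (∀ ψ : G, |μ (φ * ψ) - μ ψ| ≤ (m : ℝ) * e₀) ∧ |μ φ| ≤ (m : ℝ) * e₀ :=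
  homogenization_fragmentation_estimate_general f hf μ hμ T hT e₀ hTf φ m L hLm hLT hφ
end

section
/- Let M be a locally compact Hausdorff topological space and let C_c(M) denote the space of compactly supported continuous real-valued functions on M. Let ζ : C_c(M) → ℝ satisfy: (a) ζ(f) − ζ(g) ≤ sup_{x∈M}(f(x) − g(x)) for all f, g ∈ C_c(M); (b) ζ(f) + ζ(−f) ≥ 0 for all f ∈ C_c(M). Call a compact subset X ⊆ M ζ-superheavy if ζ(f) = c for every f ∈ C_c(M) and c ∈ ℝ with f(x) = c for all x ∈ X. Then a nonempty compact subset X ⊆ M is ζ-superheavy if and only if ζ(f) ≤ max_{x∈X} f(x) for every f ∈ C_c(M). -/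
/-! Property (a) makes `ζ` monotone. If `X` is superheavy and `m` is the maximum of `f` on `X`,
then `f ⊔ m • g`, with `g` an Urysohn function equal to `1` on `X`, dominates `f` and equals `m`
on `X`, so `ζ f ≤ m`. Conversely, if `f = c` on `X`, the bound applied to `f` and `-f` gives
`ζ f ≤ c` and `ζ (-f) ≤ -c`, and property (b) forces `ζ f = c`. -/

open CompactlySupported

namespace CompactlySupportedContinuousMap

variable {M : Type*} [TopologicalSpace M]

theorem exists_eqOn_one_of_isCompact [LocallyCompactSpace M] [T2Space M] {X : Set M}
    (hX : IsCompact X) : ∃ g : C_c(M, ℝ), ∀ x ∈ X, g x = 1 := by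
  obtain ⟨g, hg1, -, hgc, -⟩ :=
    exists_continuous_one_zero_of_isCompact hX isClosed_empty (Set.disjoint_empty X)
  exact ⟨⟨g, hgc⟩, hg1⟩

theorem exists_le_eqOn_const_of_le [LocallyCompactSpace M] [T2Space M] {X : Set M}
    (hX : IsCompact X) {f : C_c(M, ℝ)} {c : ℝ} (hfc : ∀ x ∈ X, f x ≤ c) :
    ∃ h : C_c(M, ℝ), f ≤ h ∧ ∀ x ∈ X, h x = c := by
  obtain ⟨g, hg⟩ := exists_eqOn_one_of_isCompact hX
  refine ⟨f ⊔ c • g, le_sup_left, fun x hx => ?_⟩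
  simp [hg x hx, hfc x hx]

theorem iSup_apply_eq_of_eqOn_const {X : Set M} [Nonempty X] {f : C_c(M, ℝ)} {c : ℝ}
    (hfc : ∀ x ∈ X, f x = c) : ⨆ x : X, f (x : M) = c := by
  simp only [fun x : X => hfc x x.2, ciSup_const]

end CompactlySupportedContinuousMap

open CompactlySupportedContinuousMap

section QuasiState

variable {M : Type*} [TopologicalSpace M] {ζ : C_c(M, ℝ) → ℝ}

theorem monotone_of_sub_le_iSup (ha : ∀ f g : C_c(M, ℝ), ζ f - ζ g ≤ ⨆ x : M, (f x - g x)) :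
    Monotone ζ := fun f g hfg => by
  have : ⨆ x : M, (f x - g x) ≤ 0 := Real.iSup_le (fun x => sub_nonpos.mpr (hfg x)) le_rfl
  linarith [ha f g]

theorem le_iSup_of_superheavy [LocallyCompactSpace M] [T2Space M]
    (ha : ∀ f g : C_c(M, ℝ), ζ f - ζ g ≤ ⨆ x : M, (f x - g x))
    {X : Set M} (hX : IsCompact X)
    (hsh : ∀ (f : C_c(M, ℝ)) (c : ℝ), (∀ x ∈ X, f x = c) → ζ f = c) (f : C_c(M, ℝ)) :
    ζ f ≤ ⨆ x : X, f (x : M) := by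
  have hbdd : BddAbove (Set.range fun x : X => f (x : M)) := by
    rw [← Set.image_eq_range]
    exact hX.bddAbove_image f.continuous.continuousOn
  obtain ⟨h, hfh, hhX⟩ := exists_le_eqOn_const_of_le hX
    (fun x hx => le_ciSup hbdd (⟨x, hx⟩ : X))
  calc ζ f ≤ ζ h := monotone_of_sub_le_iSup ha hfh
    _ = ⨆ x : X, f (x : M) := hsh h _ hhX

theorem superheavy_of_le_iSup (hb : ∀ f : C_c(M, ℝ), 0 ≤ ζ f + ζ (-f))
    {X : Set M} (hXne : X.Nonempty) (hle : ∀ f : C_c(M, ℝ), ζ f ≤ ⨆ x : X, f (x : M))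
    (f : C_c(M, ℝ)) (c : ℝ) (hfc : ∀ x ∈ X, f x = c) : ζ f = c := by
  have := hXne.to_subtype
  have hf : ζ f ≤ c := iSup_apply_eq_of_eqOn_const hfc ▸ hle f
  have hnegf : ζ (-f) ≤ -c :=
    iSup_apply_eq_of_eqOn_const (X := X) (f := -f) (c := -c) (fun x hx => by simp [hfc x hx]) ▸
      hle (-f)
  linarith [hb f]

end QuasiState

/-- Let `M` be a locally compact Hausdorff topological space and
`C_c(M, ℝ)` the space of compactly supported continuous real-valued functions on `M`.
Let `ζ : C_c(M, ℝ) → ℝ` satisfy: (a) `ζ f - ζ g ≤ sup_{x ∈ M} (f x - g x)` for all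
`f g`; (b) `ζ f + ζ (-f) ≥ 0` for all `f`. Call a compact subset `X ⊆ M` superheavy if
`ζ f = c` whenever `f` is constantly equal to `c` on `X`. Then a nonempty compact
`X ⊆ M` is superheavy iff `ζ f ≤ max_{x ∈ X} f x` for every `f`. -/
theorem superheavy_iff_le_max
    {M : Type*} [TopologicalSpace M] [LocallyCompactSpace M] [T2Space M]
    (ζ : C_c(M, ℝ) → ℝ)
    (ha : ∀ f g : C_c(M, ℝ), ζ f - ζ g ≤ ⨆ x : M, (f x - g x))
    (hb : ∀ f : C_c(M, ℝ), 0 ≤ ζ f + ζ (-f))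
    (X : Set M) (hX : IsCompact X) (hXne : X.Nonempty) :
    (∀ (f : C_c(M, ℝ)) (c : ℝ), (∀ x ∈ X, f x = c) → ζ f = c) ↔
      (∀ f : C_c(M, ℝ), ζ f ≤ ⨆ x : X, f (x : M)) :=
  ⟨le_iSup_of_superheavy ha hX, superheavy_of_le_iSup hb hXne⟩
end

section
/- Let M be a locally compact Hausdorff topological space and let C_c(M) denote the space of compactly supported continuous real-valued functions on M. Let ζ : C_c(M) → ℝ satisfy: (a) ζ(0) = 0 and ζ(f) − ζ(g) ≤ sup_{x∈M}(f(x) − g(x)) for all f, g ∈ C_c(M); (b) ζ(f + g) ≤ ζ(f) + ζ(g) whenever f, g ∈ C_c(M) have disjoint supports. Call a compact subset X ⊆ M ζ-superheavy if ζ(f) = c for every f ∈ C_c(M) and c ∈ ℝ with f(x) = c for all x ∈ X. Then any two nonempty compact ζ-superheavy subsets X, X' ⊆ M intersect: X ∩ X' ≠ ∅. -/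
/-! If `X ∩ X' = ∅`, Urysohn's lemma gives `f, f'` with values in `[-1, 0]`, equal to `-1`
on `X` and `X'` respectively, with disjoint supports. Superheaviness and subadditivity give
`ζ (f + f') ≤ -2`, while `f + f' ≥ -1` pointwise and the Lipschitz bound give
`ζ (f + f') ≥ -1`. -/

open CompactlySupported Function Set

theorem le_add_apply_of_disjoint_support {ι β : Type*} [AddZeroClass β] [LE β] {f g : ι → β}
    (h : Disjoint (support f) (support g)) {c : β} {x : ι} (hf : c ≤ f x) (hg : c ≤ g x) :
    c ≤ f x + g x := by
  by_cases hfx : f x = 0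
  · simpa [hfx] using hg
  · have hgx : g x = 0 := notMem_support.mp (h.notMem_of_mem_left (mem_support.mpr hfx))
    simpa [hgx] using hf

section

variable {M : Type*} [TopologicalSpace M]

theorem exists_compactlySupported_one_of_isCompact_subset_isOpen [R1Space M]
    [LocallyCompactSpace M] {K V : Set M} (hK : IsCompact K) (hV : IsOpen V) (hKV : K ⊆ V) :
    ∃ f : C_c(M, ℝ), EqOn f 1 K ∧ tsupport f ⊆ V ∧ ∀ x, f x ∈ Icc 0 1 := by
  obtain ⟨f, hfK, hf, hfV, hf01⟩ :=
    exists_continuousMap_one_of_isCompact_subset_isOpen hK hV hKV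
  exact ⟨⟨f, hf⟩, hfK, hfV, hf01⟩

theorem le_apply_of_forall_le {ζ : C_c(M, ℝ) → ℝ} (ha0 : ζ 0 = 0)
    (ha : ∀ f g : C_c(M, ℝ), ζ f - ζ g ≤ ⨆ x : M, (f x - g x))
    {f : C_c(M, ℝ)} {c : ℝ} (hc : c ≤ 0) (hf : ∀ x, c ≤ f x) : c ≤ ζ f := by
  -- `c ≤ 0` is needed because `⨆` over an empty `M` is `0`.
  have hsup : ⨆ x : M, ((0 : C_c(M, ℝ)) x - f x) ≤ -c :=
    Real.iSup_le (fun x ↦ by simpa using hf x) (neg_nonneg.mpr hc)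
  linarith [ha 0 f]

end

theorem superheavy_intersect_general
    {M : Type*} [TopologicalSpace M] [LocallyCompactSpace M] [T2Space M]
    (ζ : C_c(M, ℝ) → ℝ)
    (ha0 : ζ 0 = 0)
    (ha : ∀ f g : C_c(M, ℝ), ζ f - ζ g ≤ ⨆ x : M, (f x - g x))
    (hb : ∀ f g : C_c(M, ℝ), Disjoint (tsupport ⇑f) (tsupport ⇑g) →
      ζ (f + g) ≤ ζ f + ζ g)
    (X X' : Set M) (hX : IsCompact X) (hX' : IsCompact X')
    (hXsh : ∀ (f : C_c(M, ℝ)) (c : ℝ), (∀ x ∈ X, f x = c) → ζ f = c)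
    (hX'sh : ∀ (f : C_c(M, ℝ)) (c : ℝ), (∀ x ∈ X', f x = c) → ζ f = c) :
    (X ∩ X').Nonempty := by
  rw [← not_disjoint_iff_nonempty_inter]
  intro hdisj
  obtain ⟨U, U', hU, hU', hXU, hX'U', hUU'⟩ := SeparatedNhds.of_isCompact_isCompact hX hX' hdisj
  obtain ⟨f, hfX, hfU, hf01⟩ :=
    exists_compactlySupported_one_of_isCompact_subset_isOpen hX hU hXU
  obtain ⟨f', hf'X', hf'U', hf'01⟩ :=
    exists_compactlySupported_one_of_isCompact_subset_isOpen hX' hU' hX'U'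
  have hd : Disjoint (tsupport ⇑(-f)) (tsupport ⇑(-f')) := by
    simpa [tsupport_neg] using hUU'.mono hfU hf'U'
  have hζf : ζ (-f) = -1 := hXsh _ _ fun x hx ↦ by simp [hfX hx]
  have hζf' : ζ (-f') = -1 := hX'sh _ _ fun x hx ↦ by simp [hf'X' hx]
  have hsum : -1 ≤ ζ (-f + -f') :=
    le_apply_of_forall_le ha0 ha (by norm_num) fun x ↦
      le_add_apply_of_disjoint_support (hd.mono (subset_tsupport _) (subset_tsupport _))
        (by simpa using (hf01 x).2) (by simpa using (hf'01 x).2)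
  linarith [hb _ _ hd]

/-- Let `M` be a locally compact Hausdorff topological space and
`C_c(M, ℝ)` the space of compactly supported continuous real-valued functions on `M`.
Let `ζ : C_c(M, ℝ) → ℝ` satisfy: (a) `ζ 0 = 0` and `ζ f - ζ g ≤ sup_{x ∈ M} (f x - g x)`
for all `f g`; (b) `ζ (f + g) ≤ ζ f + ζ g` whenever `f, g` have disjoint supports.
Call a compact subset `X ⊆ M` superheavy if `ζ f = c` whenever `f` is constantly equal
to `c` on `X`. Then any two nonempty compact superheavy subsets `X, X' ⊆ M`
intersect. -/
theorem superheavy_intersect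
    {M : Type*} [TopologicalSpace M] [LocallyCompactSpace M] [T2Space M]
    (ζ : C_c(M, ℝ) → ℝ)
    (ha0 : ζ 0 = 0)
    (ha : ∀ f g : C_c(M, ℝ), ζ f - ζ g ≤ ⨆ x : M, (f x - g x))
    (hb : ∀ f g : C_c(M, ℝ), Disjoint (tsupport ⇑f) (tsupport ⇑g) →
      ζ (f + g) ≤ ζ f + ζ g)
    (X X' : Set M) (hX : IsCompact X) (hXne : X.Nonempty)
    (hX' : IsCompact X') (hX'ne : X'.Nonempty)
    (hXsh : ∀ (f : C_c(M, ℝ)) (c : ℝ), (∀ x ∈ X, f x = c) → ζ f = c)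
    (hX'sh : ∀ (f : C_c(M, ℝ)) (c : ℝ), (∀ x ∈ X', f x = c) → ζ f = c) :
    (X ∩ X').Nonempty :=
  superheavy_intersect_general ζ ha0 ha hb X X' hX hX' hXsh hX'sh
end

section
/- Let 𝒱 = (V, v⃗, 𝒜, ∂) and 𝒱' = (V', v⃗', 𝒜', ∂') be filtered graded chain complexes over ℤ/2 in general position, meaning the function (v, v') ↦ 𝒜(v) + 𝒜'(v') on v⃗ × v⃗' is injective, and let 𝒱'' = 𝒱 ⊗ 𝒱' be their product. Then for every nonzero α ∈ H(V, ∂) and every nonzero α' ∈ H(V', ∂'), the class α ⊗ α' ∈ H(V'', ∂'') = H(V, ∂) ⊗ H(V', ∂') is nonzero and ℓ(α ⊗ α', 𝒱'') = ℓ(α, 𝒱) + ℓ(α', 𝒱'). -/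
/-!
Upper bound: if cycles `c ~ z` and `c' ~ z'` are supported below `a` and `a'`, then `c ⊗ c'` is
a cycle homologous to `z ⊗ z'` supported below `a + a'`.

Lower bound: `z ∉ im ∂ + V^{<ℓ(z)}`, since such a decomposition would give a representative of
`[z]` supported strictly below `ℓ(z)` (the basis is finite). Hence some `φ` with `φ(z) = 1`
vanishes on boundaries and on basis vectors of action `< ℓ(z)`. Contracting the first factor
with `φ` is a chain map `V ⊗ V' → V'` sending `z ⊗ z'` to `z'`, so it sends a primitive of
`z ⊗ z'` to one of `z'` (thus `z ⊗ z'` is not a boundary), and a representative `C` of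
`[z ⊗ z']` to a representative of `[z']`. The latter has a nonzero coefficient at some `v'` with
`𝒜'(v') ≥ ℓ(z')`, and the sum computing it has a nonzero term `φ(v) C(v, v')`, so
`ℓ(z) + ℓ(z') ≤ 𝒜(v) + 𝒜'(v')`, which is below any level containing the support of `C`.
-/

/-- The spectral invariant `ℓ([z], 𝒱)` of the homology class represented by a cycle `z`
in a filtered chain complex over `ℤ/2` with (finite) basis `ι`, action `A : ι → ℝ` and
differential `d`: the infimum of the filtration levels `a` such that the class of `z` is
in the image of `H(V^{<a}) → H`, i.e. such that some cycle homologous to `z` is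
supported on basis elements of action `< a`. -/
noncomputable def specInv {ι : Type*} [Fintype ι] (A : ι → ℝ)
    (d : (ι → ZMod 2) →ₗ[ZMod 2] (ι → ZMod 2)) (z : ι → ZMod 2) : ℝ :=
  sInf {a : ℝ | ∃ c : ι → ZMod 2, d c = 0 ∧ c - z ∈ LinearMap.range d ∧
    ∀ i : ι, c i ≠ 0 → A i < a}

open Filter Topology

section SupportedBelow

variable {ι R : Type*} [Semiring R]

-- The subspace `V^{<a}`.
def supportedBelow (A : ι → ℝ) (a : ℝ) : Submodule R (ι → R) :=
  Submodule.pi {i | a ≤ A i} fun _ => ⊥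

variable {A : ι → ℝ} {a : ℝ} {c : ι → R}

theorem mem_supportedBelow : c ∈ supportedBelow A a ↔ ∀ i, c i ≠ 0 → A i < a := by
  simp [supportedBelow, Submodule.mem_pi, not_imp_comm]

theorem exists_lt_of_mem_supportedBelow [Finite ι] (hc : c ∈ supportedBelow A a) :
    ∃ b < a, c ∈ supportedBelow A b := by
  have hfin : ∀ᶠ b in 𝓝[<] a, ∀ i, c i ≠ 0 → A i < b :=
    eventually_all.2 fun i => eventually_imp_distrib_left.2 fun hi =>
      eventually_nhdsWithin_of_eventually_nhds (eventually_gt_nhds (mem_supportedBelow.1 hc i hi))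
  obtain ⟨b, hba, hb⟩ := (eventually_mem_nhdsWithin.and hfin).exists
  exact ⟨b, hba, mem_supportedBelow.2 hb⟩

end SupportedBelow

theorem exists_dotProduct_eq_one_of_notMem {K ι : Type*} [Field K] [Fintype ι]
    {U : Submodule K (ι → K)} {z : ι → K} (hz : z ∉ U) :
    ∃ φ : ι → K, φ ⬝ᵥ z = 1 ∧ ∀ u ∈ U, φ ⬝ᵥ u = 0 := by
  classical
  obtain ⟨f, hfz, hfU⟩ := U.exists_dual_map_eq_bot_of_notMem hz inferInstance
  have hf : ∀ x, (dotProductEquiv K ι).symm f ⬝ᵥ x = f x := fun x => by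
    rw [← dotProductEquiv_apply_apply, LinearEquiv.apply_symm_apply]
  refine ⟨(f z)⁻¹ • (dotProductEquiv K ι).symm f, ?_, fun u hu => ?_⟩
  · rw [smul_dotProduct, hf, smul_eq_mul, inv_mul_cancel₀ hfz]
  · have hfu : f u ∈ (⊥ : Submodule K K) := hfU ▸ Submodule.mem_map_of_mem hu
    rw [smul_dotProduct, hf, (Submodule.mem_bot K).1 hfu, smul_zero]

section SpecInv

variable {ι : Type*} [Fintype ι] {A : ι → ℝ} {d : (ι → ZMod 2) →ₗ[ZMod 2] (ι → ZMod 2)}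
  {z c : ι → ZMod 2} {a b : ℝ}

theorem specInv_le (hzb : z ∉ LinearMap.range d) (hc : d c = 0) (hcz : c - z ∈ LinearMap.range d)
    (hca : c ∈ supportedBelow A a) : specInv A d z ≤ a := by
  refine csInf_le ⟨⨅ i, A i, ?_⟩ ⟨c, hc, hcz, mem_supportedBelow.1 hca⟩
  rintro a ⟨c, -, hcz, hca⟩
  obtain ⟨i, hi⟩ : ∃ i, c i ≠ 0 := by
    by_contra! hc0
    rw [show c = 0 from funext hc0, zero_sub, neg_mem_iff] at hcz
    exact hzb hcz
  exact (ciInf_le (Finite.bddBelow_range A) i).trans (hca i hi).le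

theorem specInv_set_nonempty (hz : d z = 0) :
    {a : ℝ | ∃ c : ι → ZMod 2, d c = 0 ∧ c - z ∈ LinearMap.range d ∧
      ∀ i : ι, c i ≠ 0 → A i < a}.Nonempty :=
  ⟨(⨆ i, A i) + 1, z, hz, by simp, fun i _ =>
    (le_ciSup (Finite.bddAbove_range A) i).trans_lt (lt_add_one _)⟩

theorem exists_cycle_mem_supportedBelow_of_specInv_lt (hz : d z = 0) (h : specInv A d z < a) :
    ∃ c, d c = 0 ∧ c - z ∈ LinearMap.range d ∧ c ∈ supportedBelow A a := by
  obtain ⟨b, ⟨c, hc, hcz, hcb⟩, hba⟩ := exists_lt_of_csInf_lt (specInv_set_nonempty hz) h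
  exact ⟨c, hc, hcz, mem_supportedBelow.2 fun i hi => (hcb i hi).trans hba⟩

theorem le_specInv (hz : d z = 0) (h : ∀ a c, d c = 0 → c - z ∈ LinearMap.range d →
    c ∈ supportedBelow A a → b ≤ a) : b ≤ specInv A d z :=
  le_csInf (specInv_set_nonempty hz) fun a ⟨c, hc, hcz, hca⟩ =>
    h a c hc hcz (mem_supportedBelow.2 hca)

theorem notMem_range_sup_supportedBelow_specInv (hd2 : ∀ c, d (d c) = 0) (hz : d z = 0)
    (hzb : z ∉ LinearMap.range d) : z ∉ LinearMap.range d ⊔ supportedBelow A (specInv A d z) := by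
  intro hmem
  obtain ⟨_, ⟨e, rfl⟩, c, hc, hec⟩ := Submodule.mem_sup.1 hmem
  obtain ⟨b, hb, hcb⟩ := exists_lt_of_mem_supportedBelow hc
  have hcycle : d c = 0 := by rw [← hec] at hz; rwa [map_add, hd2, zero_add] at hz
  have hcz : c - z ∈ LinearMap.range d := ⟨-e, by rw [← hec, map_neg]; abel⟩
  exact hb.not_ge (specInv_le hzb hcycle hcz hcb)

theorem exists_dotProduct_eq_one_of_specInv (hd2 : ∀ c, d (d c) = 0) (hz : d z = 0)
    (hzb : z ∉ LinearMap.range d) :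
    ∃ φ : ι → ZMod 2, φ ⬝ᵥ z = 1 ∧ (∀ e, φ ⬝ᵥ d e = 0) ∧ ∀ i, φ i ≠ 0 → specInv A d z ≤ A i := by
  classical
  obtain ⟨φ, hφz, hφ⟩ :=
    exists_dotProduct_eq_one_of_notMem
      (notMem_range_sup_supportedBelow_specInv (A := A) hd2 hz hzb)
  refine ⟨φ, hφz, fun e => hφ _ (Submodule.mem_sup_left ⟨e, rfl⟩), fun i hi => ?_⟩
  by_contra! hlt
  refine hi ?_
  rw [← dotProduct_single_one φ i]
  refine hφ _ (Submodule.mem_sup_right (mem_supportedBelow.2 fun j hj => ?_))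
  obtain rfl : j = i := by by_contra hji; simp [Pi.single_eq_of_ne hji] at hj
  exact hlt

end SpecInv

section TensorComplex

variable {ι ι' R : Type*} [CommRing R]

def tensorDiff (d : (ι → R) →ₗ[R] (ι → R)) (d' : (ι' → R) →ₗ[R] (ι' → R)) :
    (ι × ι' → R) →ₗ[R] (ι × ι' → R) :=
  LinearMap.pi fun p =>
    LinearMap.proj p.1 ∘ₗ d ∘ₗ LinearMap.funLeft R R (·, p.2) +
      LinearMap.proj p.2 ∘ₗ d' ∘ₗ LinearMap.funLeft R R (p.1, ·)

theorem tensorDiff_apply (d : (ι → R) →ₗ[R] (ι → R)) (d' : (ι' → R) →ₗ[R] (ι' → R))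
    (c : ι × ι' → R) (p : ι × ι') :
    tensorDiff d d' c p = d (fun i => c (i, p.2)) p.1 + d' (fun j => c (p.1, j)) p.2 :=
  rfl

def tensorVec : (ι → R) →ₗ[R] (ι' → R) →ₗ[R] (ι × ι' → R) :=
  LinearMap.mk₂ R (fun c c' p => c p.1 * c' p.2)
    (fun _ _ _ => funext fun _ => add_mul _ _ _) (fun _ _ _ => funext fun _ => mul_assoc _ _ _)
    (fun _ _ _ => funext fun _ => mul_add _ _ _) (fun _ _ _ => funext fun _ => mul_left_comm _ _ _)

theorem tensorVec_apply (c : ι → R) (c' : ι' → R) (p : ι × ι') :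
    tensorVec c c' p = c p.1 * c' p.2 :=
  rfl

variable {d : (ι → R) →ₗ[R] (ι → R)} {d' : (ι' → R) →ₗ[R] (ι' → R)}

theorem tensorDiff_tensorVec (c : ι → R) (c' : ι' → R) :
    tensorDiff d d' (tensorVec c c') = tensorVec (d c) c' + tensorVec c (d' c') := by
  funext p
  have hc : (fun i => c i * c' p.2) = c' p.2 • c := funext fun i => mul_comm _ _
  have hc' : (fun j => c p.1 * c' j) = c p.1 • c' := rfl
  simp only [tensorDiff_apply, tensorVec_apply, hc, hc', map_smul, Pi.add_apply, Pi.smul_apply,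
    smul_eq_mul, mul_comm]

theorem tensorDiff_tensorVec_eq_zero {c : ι → R} {c' : ι' → R} (hc : d c = 0) (hc' : d' c' = 0) :
    tensorDiff d d' (tensorVec c c') = 0 := by
  simp [tensorDiff_tensorVec, hc, hc']

theorem tensorVec_sub_tensorVec_mem_range {z c : ι → R} {z' c' : ι' → R} (hz : d z = 0)
    (hc' : d' c' = 0) (hcz : c - z ∈ LinearMap.range d) (hcz' : c' - z' ∈ LinearMap.range d') :
    tensorVec c c' - tensorVec z z' ∈ LinearMap.range (tensorDiff d d') := by
  obtain ⟨e, he⟩ := hcz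
  obtain ⟨e', he'⟩ := hcz'
  refine ⟨tensorVec e c' + tensorVec z e', ?_⟩
  simp only [map_add, tensorDiff_tensorVec, he, he', hz, hc', map_zero, LinearMap.zero_apply,
    map_sub, LinearMap.sub_apply]
  abel

theorem tensorVec_mem_supportedBelow {A : ι → ℝ} {A' : ι' → ℝ} {a a' : ℝ} {c : ι → R}
    {c' : ι' → R} (hc : c ∈ supportedBelow A a) (hc' : c' ∈ supportedBelow A' a') :
    tensorVec c c' ∈ supportedBelow (fun p : ι × ι' => A p.1 + A' p.2) (a + a') :=
  mem_supportedBelow.2 fun _ hp =>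
    add_lt_add (mem_supportedBelow.1 hc _ (left_ne_zero_of_mul hp))
      (mem_supportedBelow.1 hc' _ (right_ne_zero_of_mul hp))

variable [Fintype ι]

def contractFst (φ : ι → R) : (ι × ι' → R) →ₗ[R] (ι' → R) :=
  ∑ i, φ i • LinearMap.funLeft R R (Prod.mk i)

theorem contractFst_apply (φ : ι → R) (W : ι × ι' → R) (j : ι') :
    contractFst φ W j = ∑ i, φ i * W (i, j) := by
  simp [contractFst, LinearMap.funLeft_apply]

theorem contractFst_tensorVec (φ : ι → R) (c : ι → R) (c' : ι' → R) :
    contractFst φ (tensorVec c c') = (φ ⬝ᵥ c) • c' := by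
  funext j
  simp [contractFst_apply, tensorVec_apply, dotProduct, Finset.sum_mul, mul_assoc]

theorem contractFst_tensorDiff {φ : ι → R} (hφ : ∀ e, φ ⬝ᵥ d e = 0) (W : ι × ι' → R) :
    contractFst φ (tensorDiff d d' W) = d' (contractFst φ W) := by
  have hW : contractFst φ W = ∑ i, φ i • fun j => W (i, j) := by
    funext j; simp [contractFst_apply]
  funext j
  simp only [contractFst_apply, tensorDiff_apply, mul_add, Finset.sum_add_distrib, hW, map_sum,
    map_smul, Finset.sum_apply, Pi.smul_apply, smul_eq_mul]
  rw [← dotProduct, hφ, zero_add]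

theorem tensorVec_notMem_range {φ z : ι → R} {z' : ι' → R} (hφz : φ ⬝ᵥ z = 1)
    (hφ : ∀ e, φ ⬝ᵥ d e = 0) (hz' : z' ∉ LinearMap.range d') :
    tensorVec z z' ∉ LinearMap.range (tensorDiff d d') := by
  rintro ⟨W, hW⟩
  exact hz' ⟨contractFst φ W, by
    rw [← contractFst_tensorDiff hφ, hW, contractFst_tensorVec, hφz, one_smul]⟩

end TensorComplex

section SpecInvTensor

variable {ι ι' : Type*} [Fintype ι] [Fintype ι'] {A : ι → ℝ} {A' : ι' → ℝ}
  {d : (ι → ZMod 2) →ₗ[ZMod 2] (ι → ZMod 2)} {d' : (ι' → ZMod 2) →ₗ[ZMod 2] (ι' → ZMod 2)}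
  {z : ι → ZMod 2} {z' : ι' → ZMod 2}

theorem specInv_tensorVec_le (hz : d z = 0) (hz' : d' z' = 0)
    (hzb : tensorVec z z' ∉ LinearMap.range (tensorDiff d d')) :
    specInv (fun p : ι × ι' => A p.1 + A' p.2) (tensorDiff d d') (tensorVec z z') ≤
      specInv A d z + specInv A' d' z' := by
  refine le_of_forall_pos_le_add fun ε hε => ?_
  obtain ⟨c, hc, hcz, hca⟩ := exists_cycle_mem_supportedBelow_of_specInv_lt hz
    (lt_add_of_pos_right (specInv A d z) (half_pos hε))
  obtain ⟨c', hc', hcz', hca'⟩ := exists_cycle_mem_supportedBelow_of_specInv_lt hz'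
    (lt_add_of_pos_right (specInv A' d' z') (half_pos hε))
  have hcc' := tensorVec_mem_supportedBelow hca hca'
  refine (specInv_le hzb (tensorDiff_tensorVec_eq_zero hc hc')
    (tensorVec_sub_tensorVec_mem_range hz hc' hcz hcz') hcc').trans_eq ?_
  ring

theorem add_specInv_le_specInv_tensorVec {φ : ι → ZMod 2} {s : ℝ} (hφz : φ ⬝ᵥ z = 1)
    (hφ : ∀ e, φ ⬝ᵥ d e = 0) (hφA : ∀ i, φ i ≠ 0 → s ≤ A i) (hd2' : ∀ c, d' (d' c) = 0)
    (hz : d z = 0) (hz' : d' z' = 0) (hzb' : z' ∉ LinearMap.range d') :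
    s + specInv A' d' z' ≤
      specInv (fun p : ι × ι' => A p.1 + A' p.2) (tensorDiff d d') (tensorVec z z') := by
  refine le_specInv (tensorDiff_tensorVec_eq_zero hz hz') fun a C _ ⟨W, hW⟩ hCa => ?_
  have hsCz : contractFst φ C - z' ∈ LinearMap.range d' :=
    ⟨contractFst φ W, by
      rw [← contractFst_tensorDiff hφ, hW, map_sub, contractFst_tensorVec, hφz, one_smul]⟩
  obtain ⟨j, hj, hjA⟩ : ∃ j, contractFst φ C j ≠ 0 ∧ specInv A' d' z' ≤ A' j := by
    by_contra! h
    refine notMem_range_sup_supportedBelow_specInv hd2' hz' hzb' (Submodule.mem_sup.2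
      ⟨z' - contractFst φ C, ?_, contractFst φ C, mem_supportedBelow.2 h, sub_add_cancel _ _⟩)
    rw [← neg_sub]
    exact neg_mem hsCz
  rw [contractFst_apply] at hj
  obtain ⟨i, -, hi⟩ := Finset.exists_ne_zero_of_sum_ne_zero hj
  have hiA := hφA i (left_ne_zero_of_mul hi)
  have hijA : A i + A' j < a := mem_supportedBelow.1 hCa (i, j) (right_ne_zero_of_mul hi)
  linarith

end SpecInvTensor

theorem specInv_product_general {ι ι' : Type*} [Fintype ι] [Fintype ι']
    (A : ι → ℝ) (d : (ι → ZMod 2) →ₗ[ZMod 2] (ι → ZMod 2))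
    (hd2 : ∀ c : ι → ZMod 2, d (d c) = 0)
    (A' : ι' → ℝ) (d' : (ι' → ZMod 2) →ₗ[ZMod 2] (ι' → ZMod 2))
    (hd2' : ∀ c : ι' → ZMod 2, d' (d' c) = 0)
    (d'' : (ι × ι' → ZMod 2) →ₗ[ZMod 2] (ι × ι' → ZMod 2))
    (hd'' : ∀ (c : ι × ι' → ZMod 2) (p : ι × ι'),
      d'' c p = d (fun i => c (i, p.2)) p.1 + d' (fun j => c (p.1, j)) p.2)
    (z : ι → ZMod 2) (hz : d z = 0) (hznb : z ∉ LinearMap.range d)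
    (z' : ι' → ZMod 2) (hz' : d' z' = 0) (hz'nb : z' ∉ LinearMap.range d') :
    (fun p : ι × ι' => z p.1 * z' p.2) ∉ LinearMap.range d'' ∧
    specInv (fun p : ι × ι' => A p.1 + A' p.2) d'' (fun p : ι × ι' => z p.1 * z' p.2) =
      specInv A d z + specInv A' d' z' := by
  obtain rfl : d'' = tensorDiff d d' := LinearMap.ext fun c => funext (hd'' c)
  obtain ⟨φ, hφz, hφ, hφA⟩ := exists_dotProduct_eq_one_of_specInv (A := A) hd2 hz hznb
  have hzzb : tensorVec z z' ∉ LinearMap.range (tensorDiff d d') :=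
    tensorVec_notMem_range hφz hφ hz'nb
  exact ⟨hzzb, (specInv_tensorVec_le hz hz' hzzb).antisymm
    (add_specInv_le_specInv_tensorVec hφz hφ hφA hd2' hz hz' hz'nb)⟩

/-- Let `𝒱 = (V, v⃗, 𝒜, ∂)` and `𝒱' = (V', v⃗', 𝒜', ∂')` be filtered
graded chain complexes over `ℤ/2` in general position (the action
`(i, j) ↦ A i + A' j` on the product basis is injective), and let
`𝒱'' = 𝒱 ⊗ 𝒱'` be their product, with differential
`∂'' = ∂ ⊗ id + id ⊗ ∂'` (encoded pointwise on `ι × ι' → ZMod 2`). Let `α, α'` be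
nonzero homology classes of `𝒱, 𝒱'`, represented by the cycles `z, z'` which are not
boundaries. Then the class `α ⊗ α'`, represented by the cycle
`z ⊗ z' : (i, j) ↦ z i * z' j`, is nonzero, and
`ℓ(α ⊗ α', 𝒱'') = ℓ(α, 𝒱) + ℓ(α', 𝒱')`. -/
theorem specInv_product {ι ι' : Type*} [Fintype ι] [Fintype ι']
    [DecidableEq ι] [DecidableEq ι']
    (deg : ι → ℤ) (A : ι → ℝ) (hA : Function.Injective A)
    (d : (ι → ZMod 2) →ₗ[ZMod 2] (ι → ZMod 2))
    (hd2 : ∀ c : ι → ZMod 2, d (d c) = 0)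
    (hdeg : ∀ i j : ι, d (Pi.single i 1) j ≠ 0 → deg j = deg i - 1)
    (hfilt : ∀ (a : ℝ) (c : ι → ZMod 2), (∀ i : ι, c i ≠ 0 → A i < a) →
      ∀ j : ι, d c j ≠ 0 → A j < a)
    (deg' : ι' → ℤ) (A' : ι' → ℝ) (hA' : Function.Injective A')
    (d' : (ι' → ZMod 2) →ₗ[ZMod 2] (ι' → ZMod 2))
    (hd2' : ∀ c : ι' → ZMod 2, d' (d' c) = 0)
    (hdeg' : ∀ i j : ι', d' (Pi.single i 1) j ≠ 0 → deg' j = deg' i - 1)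
    (hfilt' : ∀ (a : ℝ) (c : ι' → ZMod 2), (∀ i : ι', c i ≠ 0 → A' i < a) →
      ∀ j : ι', d' c j ≠ 0 → A' j < a)
    (hgen : Function.Injective (fun p : ι × ι' => A p.1 + A' p.2))
    (d'' : (ι × ι' → ZMod 2) →ₗ[ZMod 2] (ι × ι' → ZMod 2))
    (hd'' : ∀ (c : ι × ι' → ZMod 2) (p : ι × ι'),
      d'' c p = d (fun i => c (i, p.2)) p.1 + d' (fun j => c (p.1, j)) p.2)
    (z : ι → ZMod 2) (hz : d z = 0) (hznb : z ∉ LinearMap.range d)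
    (z' : ι' → ZMod 2) (hz' : d' z' = 0) (hz'nb : z' ∉ LinearMap.range d') :
    (fun p : ι × ι' => z p.1 * z' p.2) ∉ LinearMap.range d'' ∧
    specInv (fun p : ι × ι' => A p.1 + A' p.2) d'' (fun p : ι × ι' => z p.1 * z' p.2) =
      specInv A d z + specInv A' d' z' :=
  specInv_product_general A d hd2 A' d' hd2' d'' hd'' z hz hznb z' hz' hz'nb
end
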